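/- There exist constants C > 0 such that for all x ≥ 3, |Σ_{p ≤ x, p prime} 1/p - log log x - M| ≤ C/log x, where M is the Meissel–Mertens constant. -/

import Mathlib

/-!
Mertens' first theorem, `A(n) := ∑_{p ≤ n} log p / p = log n + O(1)`, comes from Legendre's
formula `log n! = ∑_{p ≤ n} v_p(n!) log p` with `n / p - 1 ≤ v_p(n!) ≤ n / (p - 1)`, Stirling's
bounds `n log n - n ≤ log n! ≤ n log n`, Chebyshev's bound `θ(n) ≤ n log 4` and the convergence
of `∑ Λ(m) / m²`.

Partial summation with the weight `1 / log` turns this into the second theorem: once the boundary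
term `(A(n) - log n) / log n` is removed from `∑_{p ≤ n} 1 / p - log log n`, each increment is at
most a constant times `1 / log n - 1 / log (n + 1)`, so the sequence converges with error
`O(1 / log n)`.
-/

open Filter

open Finset Real
open ArithmeticFunction hiding log
open scoped Topology Nat

theorem exists_tendsto_abs_sub_le_of_abs_sub_succ_le {D f : ℕ → ℝ} {a : ℕ}
    (hf : Tendsto f atTop (𝓝 0)) (hD : ∀ n ≥ a, |D (n + 1) - D n| ≤ f n - f (n + 1)) :
    ∃ M, Tendsto D atTop (𝓝 M) ∧ ∀ n ≥ a, |D n - M| ≤ f n := by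
  have hstep : ∀ n ≥ a, ∀ m ≥ n, |D m - D n| ≤ f n - f m := by
    intro n hn m hm
    induction m, hm using Nat.le_induction with
    | base => simp
    | succ m hnm ih =>
      calc |D (m + 1) - D n| ≤ |D (m + 1) - D m| + |D m - D n| := abs_sub_le _ _ _
        _ ≤ f n - f (m + 1) := by linarith [hD m (hn.trans hnm)]
  have hclose : ∀ n ≥ a, ∀ m ≥ n, |D m - D n| ≤ f n := by
    intro n hn m hm
    have hfm : 0 ≤ f m := le_of_tendsto hf <| eventually_atTop.2
      ⟨m, fun k hk => by linarith [hstep m (hn.trans hm) k hk, abs_nonneg (D k - D m)]⟩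
    linarith [hstep n hn m hm]
  have hcauchy : CauchySeq D := by
    refine Metric.cauchySeq_iff'.2 fun ε hε => ?_
    obtain ⟨N, hNε, hNa⟩ :=
      ((hf.eventually (gt_mem_nhds hε)).and (eventually_ge_atTop a)).exists
    exact ⟨N, fun n hn => (hclose N hNa n hn).trans_lt hNε⟩
  obtain ⟨M, hM⟩ := cauchySeq_tendsto_of_complete hcauchy
  refine ⟨M, hM, fun n hn => le_of_tendsto ((tendsto_const_nhds.sub hM).abs) ?_⟩
  filter_upwards [eventually_ge_atTop n] with m hm
  rw [abs_sub_comm]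
  exact hclose n hn m hm

theorem log_sub_log_sub_one_sub_div_bounds {a b : ℝ} (ha : 0 < a) (hab : a ≤ b) :
    0 ≤ log b - log a - (1 - a / b) ∧
      log b - log a - (1 - a / b) ≤ (b - a) * (1 / a - 1 / b) := by
  have hb : 0 < b := ha.trans_le hab
  rw [← log_div hb.ne' ha.ne']
  have hlow := one_sub_inv_le_log_of_pos (div_pos hb ha)
  have hup := log_le_sub_one_of_pos (div_pos hb ha)
  rw [inv_div] at hlow
  refine ⟨by linarith, ?_⟩
  have : b / a - 1 - (1 - a / b) = (b - a) * (1 / a - 1 / b) := by field_simp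
  linarith

theorem log_succ_sub_log_le_one {n : ℕ} (hn : n ≠ 0) : log (n + 1 : ℕ) - log n ≤ 1 := by
  have hn' : (1 : ℝ) ≤ n := by exact_mod_cast Nat.one_le_iff_ne_zero.2 hn
  have : log (n + 1 : ℕ) ≤ log (2 * n) := log_le_log (by positivity) (by push_cast; linarith)
  rw [log_mul two_ne_zero (by positivity)] at this
  linarith [log_two_lt_d9]

theorem log_factorial_eq_sum_primesLE (n : ℕ) :
    log (n ! : ℕ) = ∑ p ∈ Nat.primesLE n, (n !).factorization p * log p := by
  rw [log_nat_eq_sum_factorization]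
  refine Finsupp.sum_of_support_subset _ (fun p hp => ?_) _ (by simp)
  have hp' := Nat.prime_of_mem_primeFactors hp
  exact Nat.mem_primesLE.2 ⟨(hp'.dvd_factorial).1 (Nat.dvd_of_mem_primeFactors hp), hp'⟩

theorem div_le_factorization_factorial {p : ℕ} (hp : p.Prime) (n : ℕ) :
    n / p ≤ (n !).factorization p := by
  rcases lt_or_ge n p with hnp | hpn
  · simp [Nat.div_eq_of_lt hnp]
  rw [Nat.factorization_factorial hp (Nat.lt_add_one (Nat.log p n))]
  have h1 : 1 ∈ Ico 1 (Nat.log p n + 1) := by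
    simpa using Nat.log_pos hp.one_lt hpn
  simpa using single_le_sum (f := fun i => n / p ^ i) (fun _ _ => Nat.zero_le _) h1

theorem summable_vonMangoldt_div_sq : Summable (fun n : ℕ => Λ n / (n : ℝ) ^ 2) := by
  refine (LSeriesSummable_vonMangoldt (s := 2) (by norm_num)).norm.congr fun n => ?_
  rcases eq_or_ne n 0 with rfl | hn
  · simp
  · rw [LSeries.norm_term_eq]
    simp [hn]

theorem log_div_mul_sub_one_le_two_mul_vonMangoldt {p : ℕ} (hp : p.Prime) :
    log p / (p * (p - 1)) ≤ 2 * (Λ p / (p : ℝ) ^ 2) := by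
  have hp2 : (2 : ℝ) ≤ p := by exact_mod_cast hp.two_le
  rw [vonMangoldt_apply_prime hp, mul_div_assoc',
    div_le_div_iff₀ (by nlinarith) (by positivity)]
  have hlog : 0 ≤ log p := log_natCast_nonneg p
  nlinarith [mul_le_mul_of_nonneg_left (show (p : ℝ) ^ 2 ≤ 2 * (p * (p - 1)) by nlinarith) hlog]

noncomputable def sumLogDivPrimes (n : ℕ) : ℝ := ∑ p ∈ Nat.primesLE n, log p / p

theorem sumLogDivPrimes_le_log_add_log_four {n : ℕ} (hn : n ≠ 0) :
    sumLogDivPrimes n ≤ log n + log 4 := by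
  have hn' : (0 : ℝ) < n := by positivity
  have hfloor : ∀ p ∈ Nat.primesLE n, (n : ℝ) / p - 1 ≤ (n !).factorization p := by
    intro p hp
    calc (n : ℝ) / p - 1 ≤ ((n / p : ℕ) : ℝ) := by
          rw [← Nat.floor_div_eq_div (K := ℝ)]
          exact (Nat.sub_one_lt_floor _).le
      _ ≤ _ := by exact_mod_cast div_le_factorization_factorial (Nat.prime_of_mem_primesLE hp) n
  have hlegendre : n * sumLogDivPrimes n ≤ log (n ! : ℕ) + Chebyshev.theta n := by
    rw [log_factorial_eq_sum_primesLE, Chebyshev.theta_eq_sum_primesLE_log, sumLogDivPrimes,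
      mul_sum, ← sum_add_distrib]
    refine sum_le_sum fun p hp => ?_
    have h := mul_le_mul_of_nonneg_right (hfloor p hp) (log_natCast_nonneg p)
    linarith [show (n : ℝ) * (log p / p) = (n / p - 1) * log p + log p by ring]
  have hfact : log (n ! : ℕ) ≤ n * log n := by
    rw [← log_pow]
    exact log_le_log (by positivity) (by exact_mod_cast Nat.factorial_le_pow n)
  have htheta := Chebyshev.theta_le_log4_mul_x hn'.le
  nlinarith

theorem log_sub_le_sumLogDivPrimes {n : ℕ} (hn : n ≠ 0) :
    log n - 1 - 2 * ∑' m : ℕ, Λ m / (m : ℝ) ^ 2 ≤ sumLogDivPrimes n := by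
  have hn' : (0 : ℝ) < n := by positivity
  have hstirling : n * log n - n ≤ log (n ! : ℕ) := by
    have := Stirling.le_log_factorial_stirling hn
    have : 0 ≤ log n := log_natCast_nonneg n
    have : 0 ≤ log (2 * π) := log_nonneg (by nlinarith [pi_gt_three])
    linarith
  have hprimePowers :
      ∑ p ∈ Nat.primesLE n, log p / (p * (p - 1)) ≤ 2 * ∑' m : ℕ, Λ m / (m : ℝ) ^ 2 := by
    calc ∑ p ∈ Nat.primesLE n, log p / (p * (p - 1))
        ≤ 2 * ∑ p ∈ Nat.primesLE n, Λ p / (p : ℝ) ^ 2 := by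
          rw [mul_sum]
          exact sum_le_sum fun p hp =>
            log_div_mul_sub_one_le_two_mul_vonMangoldt (Nat.prime_of_mem_primesLE hp)
      _ ≤ _ := by
          gcongr
          exact summable_vonMangoldt_div_sq.sum_le_tsum _ fun m _ =>
            div_nonneg vonMangoldt_nonneg (sq_nonneg _)
  have hlegendre : log (n ! : ℕ) ≤
      n * (sumLogDivPrimes n + ∑ p ∈ Nat.primesLE n, log p / (p * (p - 1))) := by
    rw [log_factorial_eq_sum_primesLE, sumLogDivPrimes, ← sum_add_distrib, mul_sum]
    refine sum_le_sum fun p hp => ?_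
    have hp := Nat.prime_of_mem_primesLE hp
    have hp1 : (1 : ℝ) < p := by exact_mod_cast hp.one_lt
    have hv : ((n !).factorization p : ℝ) ≤ n / (p - 1) :=
      calc ((n !).factorization p : ℝ) ≤ ((n / (p - 1) : ℕ) : ℝ) := by
            exact_mod_cast Nat.factorization_factorial_le_div_pred hp n
        _ ≤ n / ((p - 1 : ℕ) : ℝ) := Nat.cast_div_le
        _ = n / (p - 1) := by rw [Nat.cast_sub hp.one_le, Nat.cast_one]
    calc ((n !).factorization p : ℝ) * log p ≤ n / (p - 1) * log p :=
          mul_le_mul_of_nonneg_right hv (log_natCast_nonneg p)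
      _ = n * (log p / p + log p / (p * (p - 1))) := by
          field_simp [(by linarith : (p : ℝ) - 1 ≠ 0)]
          ring
  nlinarith

theorem exists_abs_sumLogDivPrimes_sub_log_le :
    ∃ K, ∀ n : ℕ, n ≠ 0 → |sumLogDivPrimes n - log n| ≤ K := by
  have hE : 0 ≤ ∑' m : ℕ, Λ m / (m : ℝ) ^ 2 :=
    tsum_nonneg fun m => div_nonneg vonMangoldt_nonneg (sq_nonneg _)
  have h4 : 0 ≤ log 4 := log_nonneg (by norm_num)
  refine ⟨log 4 + 1 + 2 * ∑' m : ℕ, Λ m / (m : ℝ) ^ 2, fun n hn => abs_le.2 ⟨?_, ?_⟩⟩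
  · linarith [log_sub_le_sumLogDivPrimes hn]
  · linarith [sumLogDivPrimes_le_log_add_log_four hn]

theorem sum_primesLE_succ (c : ℕ → ℝ) (n : ℕ) :
    ∑ p ∈ Nat.primesLE (n + 1), c p =
      ∑ p ∈ Nat.primesLE n, c p + if (n + 1).Prime then c (n + 1) else 0 := by
  simp only [Nat.primesLE_eq_filter_range, sum_filter, sum_range_succ _ (n + 1)]

noncomputable def sumInvPrimes (n : ℕ) : ℝ := ∑ p ∈ Nat.primesLE n, (1 : ℝ) / p

noncomputable def correctedSumInvPrimes (n : ℕ) : ℝ :=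
  sumInvPrimes n - log (log n) - (sumLogDivPrimes n - log n) / log n

theorem correctedSumInvPrimes_succ_sub {n : ℕ} (hn : 2 ≤ n) :
    correctedSumInvPrimes (n + 1) - correctedSumInvPrimes n =
      (sumLogDivPrimes n - log n) * (1 / log n - 1 / log (n + 1 : ℕ)) -
        (log (log (n + 1 : ℕ)) - log (log n) - (1 - log n / log (n + 1 : ℕ))) := by
  have hL : log n ≠ 0 := (log_pos (by exact_mod_cast hn)).ne'
  have hL' : log (n + 1 : ℕ) ≠ 0 := (log_pos (by exact_mod_cast (by omega : 1 < n + 1))).ne'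
  have hinv : sumInvPrimes (n + 1) - sumInvPrimes n =
      (sumLogDivPrimes (n + 1) - sumLogDivPrimes n) / log (n + 1 : ℕ) := by
    simp only [sumInvPrimes, sumLogDivPrimes, sum_primesLE_succ, add_sub_cancel_left]
    split_ifs
    · field_simp
    · simp
  simp only [correctedSumInvPrimes, show sumInvPrimes (n + 1) = sumInvPrimes n +
    (sumLogDivPrimes (n + 1) - sumLogDivPrimes n) / log (n + 1 : ℕ) by linarith]
  field_simp
  ring

theorem abs_correctedSumInvPrimes_succ_sub_le {n : ℕ} (hn : 2 ≤ n) {K : ℝ}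
    (hK : |sumLogDivPrimes n - log n| ≤ K) :
    |correctedSumInvPrimes (n + 1) - correctedSumInvPrimes n| ≤
      (K + 1) * (1 / log n - 1 / log (n + 1 : ℕ)) := by
  have hL : 0 < log n := log_pos (by exact_mod_cast hn)
  have hLL' : log n ≤ log (n + 1 : ℕ) := log_le_log (by positivity) (by push_cast; linarith)
  have hw : 0 ≤ 1 / log n - 1 / log (n + 1 : ℕ) := by
    rw [sub_nonneg]
    gcongr
  obtain ⟨he₀, he₁⟩ := log_sub_log_sub_one_sub_div_bounds hL hLL'
  have he₂ : (log (n + 1 : ℕ) - log n) * (1 / log n - 1 / log (n + 1 : ℕ)) ≤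
      1 / log n - 1 / log (n + 1 : ℕ) :=
    mul_le_of_le_one_left hw (log_succ_sub_log_le_one (by omega))
  rw [correctedSumInvPrimes_succ_sub hn]
  refine (abs_sub _ _).trans ?_
  rw [abs_mul, abs_of_nonneg hw, abs_of_nonneg he₀]
  nlinarith

theorem exists_abs_sumInvPrimes_sub_log_log_le :
    ∃ M, ∃ C > 0, ∀ n ≥ 2, |sumInvPrimes n - log (log n) - M| ≤ C / log n := by
  obtain ⟨K, hK⟩ := exists_abs_sumLogDivPrimes_sub_log_le
  have hK₀ : 0 ≤ K := (abs_nonneg _).trans (hK 1 one_ne_zero)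
  have hlog : Tendsto (fun n : ℕ => log n) atTop atTop :=
    tendsto_log_atTop.comp tendsto_natCast_atTop_atTop
  obtain ⟨M, -, hM⟩ := exists_tendsto_abs_sub_le_of_abs_sub_succ_le
    (D := correctedSumInvPrimes) (a := 2) (tendsto_const_nhds.div_atTop hlog) fun n hn => by
      rw [← mul_one_div, ← mul_one_div (K + 1), ← mul_sub]
      exact abs_correctedSumInvPrimes_succ_sub_le hn (hK n (by omega))
  refine ⟨M, 2 * K + 1, by linarith, fun n hn => ?_⟩
  have hL : 0 < log n := log_pos (by exact_mod_cast hn)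
  have hR : |(sumLogDivPrimes n - log n) / log n| ≤ K / log n := by
    rw [abs_div, abs_of_pos hL]
    exact div_le_div_of_nonneg_right (hK n (by omega)) hL.le
  calc |sumInvPrimes n - log (log n) - M|
      = |(correctedSumInvPrimes n - M) + (sumLogDivPrimes n - log n) / log n| := by
        simp only [correctedSumInvPrimes]; ring_nf
    _ ≤ (K + 1) / log n + K / log n := (abs_add_le _ _).trans (add_le_add (hM n hn) hR)
    _ = (2 * K + 1) / log n := by ring

theorem log_le_two_mul_log_floor {x : ℝ} (hx : 2 ≤ x) : log x ≤ 2 * log ⌊x⌋₊ := by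
  have hN : (2 : ℝ) ≤ ⌊x⌋₊ := by exact_mod_cast Nat.le_floor (by exact_mod_cast hx)
  calc log x ≤ log ((⌊x⌋₊ : ℝ) ^ 2) :=
        log_le_log (by linarith) ((Nat.lt_floor_add_one x).le.trans (by nlinarith))
    _ = 2 * log ⌊x⌋₊ := by rw [log_pow]; norm_num

theorem log_log_sub_log_log_floor_le {x : ℝ} (hx : 2 ≤ x) :
    log (log x) - log (log ⌊x⌋₊) ≤ 1 / log ⌊x⌋₊ := by
  have hN : 2 ≤ ⌊x⌋₊ := Nat.le_floor (by exact_mod_cast hx)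
  have hL : 0 < log ⌊x⌋₊ := log_pos (by exact_mod_cast hN)
  have hLx : log ⌊x⌋₊ ≤ log x := log_le_log (by positivity) (Nat.floor_le (by linarith))
  have hLx' : log x ≤ log (⌊x⌋₊ + 1 : ℕ) :=
    log_le_log (by linarith) (by push_cast; exact (Nat.lt_floor_add_one x).le)
  have hstep := log_succ_sub_log_le_one (n := ⌊x⌋₊) (by omega)
  have hlog := log_le_sub_one_of_pos (div_pos (hL.trans_le hLx) hL)
  rw [log_div (hL.trans_le hLx).ne' hL.ne', div_sub_one hL.ne'] at hlog
  linarith [div_le_div_of_nonneg_right (show log x - log ⌊x⌋₊ ≤ 1 by linarith) hL.le]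

theorem exists_abs_sumInvPrimes_floor_sub_log_log_le :
    ∃ M, ∃ C > 0, ∀ x : ℝ, 2 ≤ x → |sumInvPrimes ⌊x⌋₊ - log (log x) - M| ≤ C / log x := by
  obtain ⟨M, C, hC, hM⟩ := exists_abs_sumInvPrimes_sub_log_log_le
  refine ⟨M, 2 * (C + 1), by positivity, fun x hx => ?_⟩
  have hN : 2 ≤ ⌊x⌋₊ := Nat.le_floor (by exact_mod_cast hx)
  have hL : 0 < log ⌊x⌋₊ := log_pos (by exact_mod_cast hN)
  have hLx : log ⌊x⌋₊ ≤ log x := log_le_log (by positivity) (Nat.floor_le (by linarith))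
  have hmono : log (log ⌊x⌋₊) ≤ log (log x) := log_le_log hL hLx
  calc |sumInvPrimes ⌊x⌋₊ - log (log x) - M|
      = |(sumInvPrimes ⌊x⌋₊ - log (log ⌊x⌋₊) - M) - (log (log x) - log (log ⌊x⌋₊))| := by
        ring_nf
    _ ≤ |sumInvPrimes ⌊x⌋₊ - log (log ⌊x⌋₊) - M| + |log (log x) - log (log ⌊x⌋₊)| :=
        abs_sub _ _
    _ ≤ C / log ⌊x⌋₊ + 1 / log ⌊x⌋₊ := by
        rw [abs_of_nonneg (sub_nonneg.2 hmono)]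
        exact add_le_add (hM _ hN) (log_log_sub_log_log_floor_le hx)
    _ ≤ 2 * (C + 1) / log x := by
        rw [← add_div, div_le_div_iff₀ hL (hL.trans_le hLx)]
        nlinarith [log_le_two_mul_log_floor hx]

theorem filter_Iic_prime_eq_primesLE (n : ℕ) : (Iic n).filter Nat.Prime = Nat.primesLE n := by
  ext p
  simp [Nat.mem_primesLE]

/-- Mertens' second theorem with error term `O(1/log x)`; the constant `M`
(the Meissel–Mertens constant) is characterized as the limit of
`Σ_{p ≤ x} 1/p - log log x`. -/
theorem stmt_14 :
    ∃ M : ℝ,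
      Tendsto (fun x : ℝ =>
          (∑ p ∈ (Finset.Iic ⌊x⌋₊).filter Nat.Prime, (1 : ℝ) / p) - Real.log (Real.log x))
        atTop (nhds M) ∧
      ∃ C > 0, ∀ x : ℝ, 3 ≤ x →
        |(∑ p ∈ (Finset.Iic ⌊x⌋₊).filter Nat.Prime, (1 : ℝ) / p) -
            Real.log (Real.log x) - M| ≤ C / Real.log x := by
  obtain ⟨M, C, hC, hM⟩ := exists_abs_sumInvPrimes_floor_sub_log_log_le
  simp only [filter_Iic_prime_eq_primesLE]
  refine ⟨M, ?_, C, hC, fun x hx => hM x (by linarith)⟩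
  rw [← tendsto_sub_nhds_zero_iff]
  refine squeeze_zero_norm' ?_ ((tendsto_const_nhds (x := C)).div_atTop tendsto_log_atTop)
  filter_upwards [eventually_ge_atTop 2] with x hx
  exact hM x hx
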